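/- For the cycle C_n (n ≥ 3): if n ≡ 0 (mod 3) then J(C_n) = 3; if n is even and n is not divisible by 3 then J(C_n) = 2; and if n is odd and not divisible by 3 then C_n admits no J-colouring. -/

import Mathlib

/-! A J-colouring maps every closed neighbourhood onto the set of colours. In a cycle closed
neighbourhoods have three vertices and there is an edge, so a J-colouring uses two or three
colours. Read along the cycle, a proper 2-colouring alternates, so `n` is even; with three colours
every closed neighbourhood is rainbow, which makes the colouring 3-periodic, so `3 ∣ n`.
Conversely, for `p ∈ {2, 3}` dividing `n`, colouring vertex `i` by `i mod p` is a J-colouring. -/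

open SimpleGraph

/-- A proper colouring of `G` with `k` colours in which every vertex's closed
neighbourhood meets every colour class (a J-colouring). -/
def IsJCol {V : Type*} (G : SimpleGraph V) {k : ℕ} (c : V → Fin k) : Prop :=
  (∀ u v, G.Adj u v → c u ≠ c v) ∧
  (∀ v : V, ∀ i : Fin k, ∃ u, (u = v ∨ G.Adj v u) ∧ c u = i)

/-- `G` admits a J-colouring with `k` colours. -/
def HasJCol {V : Type*} (G : SimpleGraph V) (k : ℕ) : Prop :=
  ∃ c : V → Fin k, IsJCol G c

/-- The J-chromatic number: the maximum number of colours in a J-colouring. -/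
noncomputable def Jnum {V : Type*} (G : SimpleGraph V) : ℕ :=
  sSup {k | HasJCol G k}

/-- A proper colouring in which every internal vertex (degree ≥ 2) has its closed
neighbourhood meeting every colour class (a J*-colouring). -/
def IsJStarCol {V : Type*} (G : SimpleGraph V) {k : ℕ} (c : V → Fin k) : Prop :=
  (∀ u v, G.Adj u v → c u ≠ c v) ∧
  (∀ v : V, (∃ a b, a ≠ b ∧ G.Adj v a ∧ G.Adj v b) →
    ∀ i : Fin k, ∃ u, (u = v ∨ G.Adj v u) ∧ c u = i)

/-- `G` admits a J*-colouring with `k` colours. -/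
def HasJStarCol {V : Type*} (G : SimpleGraph V) (k : ℕ) : Prop :=
  ∃ c : V → Fin k, IsJStarCol G c

/-- The modified J-chromatic number. -/
noncomputable def JStarNum {V : Type*} (G : SimpleGraph V) : ℕ :=
  sSup {k | HasJStarCol G k}

open Finset

section JColouring

variable {V : Type*} {G : SimpleGraph V} {k : ℕ} {c : V → Fin k}

theorem IsJCol.colorable (hc : IsJCol G c) : G.Colorable k :=
  ⟨Coloring.mk c fun h => hc.1 _ _ h⟩

theorem IsJCol.two_le_of_adj (hc : IsJCol G c) {u v : V} (huv : G.Adj u v) : 2 ≤ k := by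
  have hne : (c u).val ≠ (c v).val := Fin.val_ne_of_ne (hc.1 u v huv)
  have := (c u).isLt
  have := (c v).isLt
  omega

theorem IsJCol.image_closedNbhd [DecidableEq V] (hc : IsJCol G c) (v : V)
    [Fintype (G.neighborSet v)] : (insert v (G.neighborFinset v)).image c = univ := by
  refine eq_univ_of_forall fun i => ?_
  obtain ⟨u, hu, rfl⟩ := hc.2 v i
  exact mem_image_of_mem c (by simpa [or_comm] using hu)

theorem IsJCol.le_degree_add_one [DecidableEq V] (hc : IsJCol G c) (v : V)
    [Fintype (G.neighborSet v)] : k ≤ G.degree v + 1 :=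
  calc k = #(univ : Finset (Fin k)) := (card_fin k).symm
    _ = #((insert v (G.neighborFinset v)).image c) := by rw [hc.image_closedNbhd]
    _ ≤ #(insert v (G.neighborFinset v)) := card_image_le
    _ ≤ G.degree v + 1 := card_insert_le _ _

end JColouring

open scoped Fin.NatCast Fin.CommRing

theorem Fin.periodic_comp_natCast {N : ℕ} [NeZero N] {α : Type*} (f : Fin N → α) :
    Function.Periodic (fun j : ℕ => f j) N := fun j => by
  simp only [Nat.cast_add, Fin.natCast_self, add_zero]

namespace SimpleGraph

variable {n : ℕ}

theorem cycleGraph_adj_add_one (v : Fin (n + 2)) : (cycleGraph (n + 2)).Adj v (v + 1) :=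
  cycleGraph_adj.mpr (Or.inr (add_sub_cancel_left v 1))

theorem cycleGraph_adj_natCast_succ (j : ℕ) :
    (cycleGraph (n + 2)).Adj (j : Fin (n + 2)) ((j + 1 : ℕ) : Fin (n + 2)) := by
  rw [Nat.cast_succ]
  exact cycleGraph_adj_add_one _

theorem cycleGraph_not_colorable_two (hodd : (n + 2) % 2 = 1) :
    ¬ (cycleGraph (n + 2)).Colorable 2 := by
  rintro ⟨C⟩
  set f : ℕ → Fin 2 := fun j => C j
  have hstep : ∀ j, f (j + 1) ≠ f j := fun j => (C.valid (cycleGraph_adj_natCast_succ j)).symm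
  have hper2 : Function.Periodic f 2 := fun j => by
    have h₁ : f (j + 1) ≠ f j := hstep j
    have h₂ : f (j + 2) ≠ f (j + 1) := hstep (j + 1)
    omega
  have hwrap : f ((n + 2) % 2) = f 0 :=
    (hper2.map_mod_nat _).trans (Fin.periodic_comp_natCast C).eq
  rw [hodd] at hwrap
  exact hstep 0 hwrap

end SimpleGraph

section Cycle

variable {n : ℕ}

theorem IsJCol.le_three {k : ℕ} {c : Fin (n + 3) → Fin k} (hc : IsJCol (cycleGraph (n + 3)) c) :
    k ≤ 3 := by
  simpa only [cycleGraph_degree_three_le] using hc.le_degree_add_one 0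

theorem IsJCol.apply_sub_one_ne_apply_add_one {c : Fin (n + 2) → Fin 3}
    (hc : IsJCol (cycleGraph (n + 2)) c) (v : Fin (n + 2)) : c (v - 1) ≠ c (v + 1) := by
  intro h
  have himage := hc.image_closedNbhd v
  rw [cycleGraph_neighborFinset, image_insert, image_insert, image_singleton, h,
    insert_eq_of_mem (mem_singleton_self _)] at himage
  have : 3 ≤ 2 :=
    calc 3 = #(univ : Finset (Fin 3)) := rfl
      _ = #{c v, c (v + 1)} := by rw [himage]
      _ ≤ 2 := card_le_two
  omega

theorem IsJCol.three_dvd {c : Fin (n + 2) → Fin 3} (hc : IsJCol (cycleGraph (n + 2)) c) :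
    3 ∣ n + 2 := by
  set f : ℕ → Fin 3 := fun j => c j
  have hstep : ∀ j, f (j + 1) ≠ f j := fun j => (hc.1 _ _ (cycleGraph_adj_natCast_succ j)).symm
  have hskip : ∀ j, f (j + 2) ≠ f j := fun j => by
    have := hc.apply_sub_one_ne_apply_add_one (j + 1)
    simp only [add_sub_cancel_right, add_assoc, one_add_one_eq_two] at this
    simpa [f] using this.symm
  have hper3 : Function.Periodic f 3 := fun j => by
    have h₁ : f (j + 1) ≠ f j := hstep j
    have h₂ : f (j + 2) ≠ f j := hskip j
    have h₃ : f (j + 2) ≠ f (j + 1) := hstep (j + 1)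
    have h₄ : f (j + 3) ≠ f (j + 2) := hstep (j + 2)
    have h₅ : f (j + 3) ≠ f (j + 1) := hskip (j + 1)
    omega
  have hwrap : f ((n + 2) % 3) = f 0 :=
    (hper3.map_mod_nat _).trans (Fin.periodic_comp_natCast c).eq
  rcases (by omega : (n + 2) % 3 = 0 ∨ (n + 2) % 3 = 1 ∨ (n + 2) % 3 = 2) with h | h | h
  · exact Nat.dvd_of_mod_eq_zero h
  · exact absurd (by rwa [h] at hwrap) (hstep 0)
  · exact absurd (by rwa [h] at hwrap) (hskip 0)

theorem hasJCol_cycleGraph_of_dvd {p : ℕ} (hp₂ : 2 ≤ p) (hp₃ : p ≤ 3) (hpn : p ∣ n + 2) :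
    HasJCol (cycleGraph (n + 2)) p := by
  set col : Fin (n + 2) → ℕ := fun v => v.val % p
  have hcol_lt : ∀ v, col v < p := fun v => Nat.mod_lt _ (by omega)
  have hcol_succ : ∀ v, col (v + 1) = (col v + 1) % p := fun v => by
    simp only [col, Fin.val_add, Fin.val_one, Nat.mod_mod_of_dvd _ hpn, Nat.mod_add_mod]
  refine ⟨fun v => ⟨col v, hcol_lt v⟩, fun u v huv heq => ?_, fun v i => ?_⟩
  · have hcuv : col u = col v := Fin.val_eq_of_eq heq
    have hu := hcol_lt u
    rw [← mem_neighborSet, cycleGraph_neighborSet] at huv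
    rcases huv with rfl | rfl
    · have := hcol_succ (u - 1)
      rw [sub_add_cancel] at this
      interval_cases p <;> omega
    · have := hcol_succ u
      interval_cases p <;> omega
  · have h₀ := hcol_succ (v - 1)
    have h₁ := hcol_succ v
    rw [sub_add_cancel] at h₀
    have hw := hcol_lt (v - 1)
    have hi := i.isLt
    rcases (by interval_cases p <;> omega :
        i.val = col v ∨ i.val = col (v + 1) ∨ i.val = col (v - 1)) with h | h | h
    · exact ⟨v, Or.inl rfl, Fin.ext h.symm⟩
    · exact ⟨v + 1, Or.inr (cycleGraph_adj_add_one v), Fin.ext h.symm⟩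
    · exact ⟨v - 1, Or.inr (cycleGraph_adj.mpr (Or.inl (sub_sub_cancel v 1))), Fin.ext h.symm⟩

end Cycle

/-- For the cycle `C_n` (`n ≥ 3`): `J(C_n) = 3` if `3 ∣ n`; `J(C_n) = 2` if `n` is
even and `3 ∤ n`; and `C_n` has no J-colouring if `n` is odd and `3 ∤ n`. -/
theorem cycle_Jnum (n : ℕ) (hn : 3 ≤ n) :
    (n % 3 = 0 → HasJCol (SimpleGraph.cycleGraph n) 3 ∧
      Jnum (SimpleGraph.cycleGraph n) = 3) ∧
    (n % 2 = 0 ∧ n % 3 ≠ 0 → HasJCol (SimpleGraph.cycleGraph n) 2 ∧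
      Jnum (SimpleGraph.cycleGraph n) = 2) ∧
    (n % 2 = 1 ∧ n % 3 ≠ 0 → ¬∃ k, HasJCol (SimpleGraph.cycleGraph n) k) := by
  obtain ⟨m, rfl⟩ : ∃ m, n = m + 3 := ⟨n - 3, by omega⟩
  have hle : ∀ k, HasJCol (cycleGraph (m + 3)) k → k ≤ 3 := fun _ ⟨_, hc⟩ => hc.le_three
  refine ⟨fun h3 => ?_, fun ⟨h2, h3⟩ => ?_, fun ⟨h2, h3⟩ => ?_⟩
  · have hJ := hasJCol_cycleGraph_of_dvd (p := 3) (by norm_num) le_rfl (Nat.dvd_of_mod_eq_zero h3)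
    exact ⟨hJ, IsGreatest.csSup_eq ⟨hJ, hle⟩⟩
  · have hJ := hasJCol_cycleGraph_of_dvd (p := 2) le_rfl (by norm_num) (Nat.dvd_of_mod_eq_zero h2)
    refine ⟨hJ, IsGreatest.csSup_eq ⟨hJ, fun k hk => ?_⟩⟩
    obtain ⟨c, hc⟩ := hk
    have := hc.le_three
    rcases (by omega : k ≤ 2 ∨ k = 3) with hk | rfl
    · exact hk
    · exact absurd (Nat.mod_eq_zero_of_dvd hc.three_dvd) h3
  · rintro ⟨k, c, hc⟩
    have := hc.two_le_of_adj (cycleGraph_adj_add_one 0)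
    have := hc.le_three
    interval_cases k
    · exact cycleGraph_not_colorable_two h2 hc.colorable
    · exact h3 (Nat.mod_eq_zero_of_dvd hc.three_dvd)
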